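/- arXiv:1302.0901 — 5 statements merged into one kernel-verified Lean document; each statement's English description precedes it below -/
import Mathlib

section
/- Let θ₀ : [-1,1] → ℝ be continuous, odd on [-1,1] (θ₀(s) = -θ₀(-s)), even on [0,1] (θ₀(s) = θ₀(1-s) for s ∈ [0,1]), and odd on [0,1/2] (θ₀(s) = -θ₀(1/2 - s) for s ∈ [0,1/2]). Then ∫_{-1}^{1} cos(θ₀(s)) sin(θ₀(s)) · (∫_{-1}^{s} cos(θ₀(σ)) dσ) ds = 0. -/
/-!
Write `q = cos θ₀ · sin θ₀` and `F = ∫_{-1}^· cos θ₀`. Oddness about `1/4` gives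
`∫_0^{1/2} q = 0`, hence `∫_0^1 q = 0` by evenness about `1/2`. The reflection `s ↦ 1 - s`
fixes `q` and sends `F` to `F 0 + F 1 - F`, so `∫_0^1 q F = (F 0 + F 1) ∫_0^1 q - ∫_0^1 q F`
vanishes. Finally `s ↦ -s` turns `∫_{-1}^0 q F` into `∫_0^1 q F - F 1 ∫_0^1 q = 0`.
-/

open Set Real intervalIntegral MeasureTheory

def EvenAboutMidpoint (f : ℝ → ℝ) (a b : ℝ) : Prop :=
  ∀ x ∈ Icc a b, f (a + b - x) = f x

def OddAboutMidpoint (f : ℝ → ℝ) (a b : ℝ) : Prop :=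
  ∀ x ∈ Icc a b, f (a + b - x) = -f x

section

variable {f g q F θ : ℝ → ℝ} {a b k : ℝ}

theorem EvenAboutMidpoint.comp (hθ : EvenAboutMidpoint θ a b) (φ : ℝ → ℝ) :
    EvenAboutMidpoint (fun x => φ (θ x)) a b :=
  fun x hx => congrArg φ (hθ x hx)

theorem OddAboutMidpoint.evenAboutMidpoint_cos (hθ : OddAboutMidpoint θ a b) :
    EvenAboutMidpoint (fun x => cos (θ x)) a b :=
  fun x hx => by simp only [hθ x hx, cos_neg]

theorem OddAboutMidpoint.cos_mul_sin (hθ : OddAboutMidpoint θ a b) :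
    OddAboutMidpoint (fun x => cos (θ x) * sin (θ x)) a b :=
  fun x hx => by simp only [hθ x hx, cos_neg, sin_neg, mul_neg]

theorem add_div_two_mem_Icc (hab : a ≤ b) : (a + b) / 2 ∈ Icc a b :=
  ⟨by linarith, by linarith⟩

theorem integral_comp_reflect (f : ℝ → ℝ) (a b : ℝ) :
    ∫ x in a..b, f (a + b - x) = ∫ x in a..b, f x := by
  rw [integral_comp_sub_left]; congr 1 <;> ring

theorem integral_comp_reflect_upper_half (f : ℝ → ℝ) (a b : ℝ) :
    ∫ x in (a + b) / 2..b, f (a + b - x) = ∫ x in a..(a + b) / 2, f x := by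
  rw [integral_comp_sub_left]; congr 1 <;> ring

theorem OddAboutMidpoint.integral_eq_zero (hab : a ≤ b) (hf : OddAboutMidpoint f a b) :
    ∫ x in a..b, f x = 0 := by
  have h : ∫ x in a..b, f x = -∫ x in a..b, f x :=
    calc ∫ x in a..b, f x = ∫ x in a..b, f (a + b - x) := (integral_comp_reflect f a b).symm
      _ = ∫ x in a..b, -f x := integral_congr fun x hx => hf x (by rwa [uIcc_of_le hab] at hx)
      _ = -∫ x in a..b, f x := integral_neg
  linarith

theorem EvenAboutMidpoint.integral_eq_two_mul (hab : a ≤ b) (hf : EvenAboutMidpoint f a b)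
    (hfi : IntervalIntegrable f volume a b) :
    ∫ x in a..b, f x = 2 * ∫ x in a..(a + b) / 2, f x := by
  have hm := add_div_two_mem_Icc hab
  have hupper : ∫ x in (a + b) / 2..b, f x = ∫ x in a..(a + b) / 2, f x := by
    rw [← integral_comp_reflect_upper_half]
    refine integral_congr fun x hx => (hf x ?_).symm
    rw [uIcc_of_le hm.2] at hx
    exact ⟨hm.1.trans hx.1, hx.2⟩
  rw [← integral_add_adjacent_intervals
    (hfi.mono_set (uIcc_subset_uIcc_left (Icc_subset_uIcc hm)))
    (hfi.mono_set (uIcc_subset_uIcc_right (Icc_subset_uIcc hm))), hupper]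
  ring

theorem EvenAboutMidpoint.primitive_reflect (hg : EvenAboutMidpoint g a b)
    (hgi : ∀ u v, IntervalIntegrable g volume u v) (c : ℝ) {x : ℝ} (hx : x ∈ Icc a b) :
    ∫ y in c..a + b - x, g y = (∫ y in c..a, g y) + (∫ y in c..b, g y) - ∫ y in c..x, g y := by
  have hshift : ∫ y in a + b - x..b, g y = ∫ y in a..x, g y :=
    calc ∫ y in a + b - x..b, g y = ∫ y in a..x, g (a + b - y) := by
          rw [integral_comp_sub_left, add_sub_cancel_left]
      _ = ∫ y in a..x, g y := integral_congr fun y hy => hg y <| by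
          rw [uIcc_of_le hx.1] at hy
          exact ⟨hy.1, hy.2.trans hx.2⟩
  have hsplit_b := integral_add_adjacent_intervals (hgi c (a + b - x)) (hgi (a + b - x) b)
  have hsplit_x := integral_add_adjacent_intervals (hgi c a) (hgi a x)
  linarith

theorem EvenAboutMidpoint.integral_mul_eq_zero (hab : a ≤ b) (hq : EvenAboutMidpoint q a b)
    (hF : ∀ x ∈ Icc a b, F (a + b - x) = k - F x) (hqi : IntervalIntegrable q volume a b)
    (hqFi : IntervalIntegrable (fun x => q x * F x) volume a b) (hq0 : ∫ x in a..b, q x = 0) :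
    ∫ x in a..b, q x * F x = 0 := by
  have h : ∫ x in a..b, q x * F x = k * (∫ x in a..b, q x) - ∫ x in a..b, q x * F x :=
    calc ∫ x in a..b, q x * F x = ∫ x in a..b, q (a + b - x) * F (a + b - x) :=
          (integral_comp_reflect (fun x => q x * F x) a b).symm
      _ = ∫ x in a..b, (k * q x - q x * F x) := integral_congr fun x hx => by
          rw [uIcc_of_le hab] at hx
          rw [hq x hx, hF x hx]
          ring
      _ = _ := by rw [integral_sub (hqi.const_mul k) hqFi, intervalIntegral.integral_const_mul]
  rw [hq0] at h
  linarith

theorem OddAboutMidpoint.integral_mul_eq_zero (hab : a ≤ b) (hq : OddAboutMidpoint q a b)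
    (hF : ∀ x ∈ Icc a b, F (a + b - x) = k - F x) (hqi : IntervalIntegrable q volume a b)
    (hqFi : IntervalIntegrable (fun x => q x * F x) volume a b)
    (hq0 : ∫ x in (a + b) / 2..b, q x = 0) (hqF0 : ∫ x in (a + b) / 2..b, q x * F x = 0) :
    ∫ x in a..b, q x * F x = 0 := by
  have hm := add_div_two_mem_Icc hab
  have hupper_sub : uIcc ((a + b) / 2) b ⊆ uIcc a b := uIcc_subset_uIcc_right (Icc_subset_uIcc hm)
  have hlower : ∫ x in a..(a + b) / 2, q x * F x
      = (∫ x in (a + b) / 2..b, q x * F x) - k * ∫ x in (a + b) / 2..b, q x :=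
    calc ∫ x in a..(a + b) / 2, q x * F x
          = ∫ x in (a + b) / 2..b, q (a + b - x) * F (a + b - x) :=
          (integral_comp_reflect_upper_half (fun x => q x * F x) a b).symm
      _ = ∫ x in (a + b) / 2..b, (q x * F x - k * q x) := integral_congr fun x hx => by
          rw [uIcc_of_le hm.2] at hx
          have hx' : x ∈ Icc a b := ⟨hm.1.trans hx.1, hx.2⟩
          rw [hq x hx', hF x hx']
          ring
      _ = _ := by
          rw [integral_sub (hqFi.mono_set hupper_sub) ((hqi.mono_set hupper_sub).const_mul k),
            intervalIntegral.integral_const_mul]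
  rw [← integral_add_adjacent_intervals
    (hqFi.mono_set (uIcc_subset_uIcc_left (Icc_subset_uIcc hm))) (hqFi.mono_set hupper_sub),
    hlower, hq0, hqF0]
  ring

end

theorem integral_cos_sin_primitive_cos (θ₀ : ℝ → ℝ) (hc : Continuous θ₀)
    (h1 : ∀ s ∈ Icc (-1 : ℝ) 1, θ₀ s = -θ₀ (-s))
    (h2 : ∀ s ∈ Icc (0 : ℝ) 1, θ₀ s = θ₀ (1 - s))
    (h3 : ∀ s ∈ Icc (0 : ℝ) (1 / 2), θ₀ s = -θ₀ (1 / 2 - s)) :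
    (∫ s in (-1 : ℝ)..1,
      cos (θ₀ s) * sin (θ₀ s) * ∫ σ in (-1 : ℝ)..s, cos (θ₀ σ)) = 0 := by
  have hθ_odd : OddAboutMidpoint θ₀ (-1) 1 := fun x hx => by simp [h1 x hx]
  have hθ_even : EvenAboutMidpoint θ₀ 0 1 := fun x hx => by simp [h2 x hx]
  have hθ_odd_half : OddAboutMidpoint θ₀ 0 (1 / 2) := fun x hx => by simp [h3 x hx]
  set q : ℝ → ℝ := fun s => cos (θ₀ s) * sin (θ₀ s)
  set F : ℝ → ℝ := fun s => ∫ σ in (-1 : ℝ)..s, cos (θ₀ σ)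
  have hgi : ∀ u v, IntervalIntegrable (fun s => cos (θ₀ s)) volume u v :=
    (continuous_cos.comp hc).intervalIntegrable
  have hq : Continuous q := by fun_prop
  have hqF : Continuous fun s => q s * F s := hq.mul (continuous_primitive hgi (-1))
  have hq0 : ∫ x in (0 : ℝ)..1, q x = 0 := by
    rw [(hθ_even.comp fun t => cos t * sin t).integral_eq_two_mul zero_le_one
      (hq.intervalIntegrable 0 1), zero_add,
      hθ_odd_half.cos_mul_sin.integral_eq_zero (by norm_num), mul_zero]
  have hqF0 : ∫ x in (0 : ℝ)..1, q x * F x = 0 :=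
    (hθ_even.comp fun t => cos t * sin t).integral_mul_eq_zero zero_le_one
      (fun x hx => (hθ_even.comp cos).primitive_reflect hgi (-1) hx)
      (hq.intervalIntegrable 0 1) (hqF.intervalIntegrable 0 1) hq0
  exact hθ_odd.cos_mul_sin.integral_mul_eq_zero (by norm_num)
    (fun x hx => hθ_odd.evenAboutMidpoint_cos.primitive_reflect hgi (-1) hx)
    (hq.intervalIntegrable (-1) 1) (hqF.intervalIntegrable (-1) 1)
    (by simpa using hq0) (by simpa using hqF0)
end

section
/- Let θ₀ : [-1,1] → ℝ be continuous, odd on [-1,1] (θ₀(s) = -θ₀(-s)), even on [-1,0] (θ₀(s) = θ₀(-1-s) for s ∈ [-1,0]), and odd on [-1/2,0] (θ₀(s) = -θ₀(-1/2-s) for s ∈ [-1/2,0]). Then ∫_{-1}^{1} sin²(θ₀(s)) · (∫_{-1}^{s} sin(θ₀(σ)) dσ) ds = 0. -/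
/-!
Put `f = sin ∘ θ₀` and `F s = ∫_{-1}^s f`. The three symmetries of `θ₀` pass to `f`. Oddness
about `-1/4` gives `∫_{-1/2}^0 f = 0`, and evenness about `-1/2` then gives `F 0 = 0`; with this,
evenness of `f` about `-1/2` makes `F` odd about `-1/2` on `[-1, 0]`, while oddness of `f` about
`0` makes `F` even on `[-1, 1]`. Hence the integrand `f² F` is odd about `-1/2` on `[-1, 0]`, so
its integral over `[-1, 0]` vanishes, and it is even on `[-1, 1]`, so its integral over `[0, 1]`
vanishes too.
-/

open Set Real

namespace intervalIntegral

variable {f g : ℝ → ℝ} {a b c : ℝ}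

theorem integral_comp_sub_left_of_eqOn (h : ∀ x ∈ uIcc a b, f (c - x) = g x) :
    ∫ x in c - b..c - a, f x = ∫ x in a..b, g x := by
  rw [← integral_comp_sub_left, integral_congr h]

theorem integral_eq_zero_of_reflect_eq_neg (hab : a + b = c)
    (h : ∀ x ∈ uIcc a b, f (c - x) = -f x) : ∫ x in a..b, f x = 0 := by
  have hrefl := integral_comp_sub_left_of_eqOn h
  rw [← hab, add_sub_cancel_right, add_sub_cancel_left, integral_neg] at hrefl
  linarith

end intervalIntegral

open intervalIntegral

section Primitive

variable {f : ℝ → ℝ}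

theorem integral_neg_one_zero_eq_zero (hf : Continuous f)
    (hsymm : ∀ x ∈ Icc (-1 : ℝ) 0, f (-1 - x) = f x)
    (hanti : ∀ x ∈ Icc (-(1 / 2) : ℝ) 0, f (-(1 / 2) - x) = -f x) :
    ∫ x in (-1 : ℝ)..0, f x = 0 := by
  have hupper : ∫ x in (-(1 / 2) : ℝ)..0, f x = 0 :=
    integral_eq_zero_of_reflect_eq_neg (by norm_num) fun x hx =>
      hanti x (by rwa [uIcc_of_le (by norm_num)] at hx)
  have hlower : ∫ x in (-1 : ℝ)..(-(1 / 2)), f x = ∫ x in (-(1 / 2) : ℝ)..0, f x := by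
    have := integral_comp_sub_left_of_eqOn (c := -1) (a := -(1 / 2)) (b := 0) fun x hx =>
      hsymm x (by rw [uIcc_of_le (by norm_num)] at hx; exact ⟨by linarith [hx.1], hx.2⟩)
    norm_num at this ⊢
    exact this
  rw [← integral_add_adjacent_intervals (hf.intervalIntegrable _ _)
    (hf.intervalIntegrable _ _), hlower, hupper, add_zero]

theorem primitive_neg_eq (hf : Continuous f) (hodd : ∀ x ∈ Icc (-1 : ℝ) 1, f (-x) = -f x)
    {x : ℝ} (hx : x ∈ Icc (0 : ℝ) 1) :
    ∫ σ in (-1 : ℝ)..(-x), f σ = ∫ σ in (-1 : ℝ)..x, f σ := by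
  have hcentral : ∫ σ in (-x)..x, f σ = 0 :=
    integral_eq_zero_of_reflect_eq_neg (neg_add_cancel x) fun y hy => by
      rw [uIcc_of_le (by linarith [hx.1])] at hy
      rw [zero_sub]
      exact hodd y ⟨by linarith [hy.1, hx.2], by linarith [hy.2, hx.2]⟩
  rw [← integral_interval_sub_left (hf.intervalIntegrable (-1) x)
    (hf.intervalIntegrable (-1) (-x))] at hcentral
  linarith

theorem primitive_reflect_eq_neg (hf : Continuous f) (hF0 : ∫ x in (-1 : ℝ)..0, f x = 0)
    (hsymm : ∀ x ∈ Icc (-1 : ℝ) 0, f (-1 - x) = f x) {s : ℝ} (hs : s ∈ Icc (-1 : ℝ) 0) :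
    ∫ σ in (-1 : ℝ)..(-1 - s), f σ = -∫ σ in (-1 : ℝ)..s, f σ := by
  have hrefl : ∫ σ in (-1 : ℝ)..(-1 - s), f σ = ∫ σ in s..0, f σ := by
    have := integral_comp_sub_left_of_eqOn (c := -1) fun x hx =>
      hsymm x (by rw [uIcc_of_le hs.2] at hx; exact ⟨by linarith [hx.1, hs.1], hx.2⟩)
    rwa [sub_zero] at this
  rw [hrefl, ← integral_interval_sub_left (hf.intervalIntegrable _ _)
    (hf.intervalIntegrable _ _), hF0, zero_sub]

theorem integral_sq_mul_primitive_eq_zero (hf : Continuous f)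
    (hodd : ∀ x ∈ Icc (-1 : ℝ) 1, f (-x) = -f x)
    (hsymm : ∀ x ∈ Icc (-1 : ℝ) 0, f (-1 - x) = f x)
    (hanti : ∀ x ∈ Icc (-(1 / 2) : ℝ) 0, f (-(1 / 2) - x) = -f x) :
    ∫ s in (-1 : ℝ)..1, f s ^ 2 * ∫ σ in (-1 : ℝ)..s, f σ = 0 := by
  set g : ℝ → ℝ := fun s => f s ^ 2 * ∫ σ in (-1 : ℝ)..s, f σ
  have hg : Continuous g :=
    (hf.pow 2).mul (continuous_primitive (fun _ _ => hf.intervalIntegrable _ _) _)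
  have hF0 := integral_neg_one_zero_eq_zero hf hsymm hanti
  have hneg : ∫ s in (-1 : ℝ)..0, g s = 0 :=
    integral_eq_zero_of_reflect_eq_neg (c := -1) (by norm_num) fun s hs => by
      rw [uIcc_of_le (by norm_num)] at hs
      simp only [g, hsymm s hs, primitive_reflect_eq_neg hf hF0 hsymm hs, mul_neg]
  have hpos : ∫ s in (0 : ℝ)..1, g s = ∫ s in (-1 : ℝ)..0, g s := by
    simpa using integral_comp_sub_left_of_eqOn (f := g) (g := g) (c := 0) (a := -1) (b := 0)
      fun s hs => by
        rw [uIcc_of_le (by norm_num)] at hs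
        have hF := primitive_neg_eq hf hodd (x := -s) ⟨by linarith [hs.2], by linarith [hs.1]⟩
        rw [neg_neg] at hF
        simp only [g, zero_sub, hodd s ⟨hs.1, by linarith [hs.2]⟩, neg_sq, ← hF]
  rw [← integral_add_adjacent_intervals (hg.intervalIntegrable (-1) 0)
    (hg.intervalIntegrable 0 1), hpos, hneg, add_zero]

end Primitive

theorem integral_sin_sq_primitive_sin (θ₀ : ℝ → ℝ) (hc : Continuous θ₀)
    (h1 : ∀ s ∈ Icc (-1 : ℝ) 1, θ₀ s = -θ₀ (-s))
    (h2 : ∀ s ∈ Icc (-1 : ℝ) 0, θ₀ s = θ₀ (-1 - s))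
    (h3 : ∀ s ∈ Icc (-(1 / 2) : ℝ) 0, θ₀ s = -θ₀ (-(1 / 2) - s)) :
    (∫ s in (-1 : ℝ)..1,
      sin (θ₀ s) ^ 2 * ∫ σ in (-1 : ℝ)..s, sin (θ₀ σ)) = 0 :=
  integral_sq_mul_primitive_eq_zero (f := fun s => sin (θ₀ s)) (continuous_sin.comp hc)
    (fun x hx => by simp only [h1 x hx, neg_neg, sin_neg])
    (fun x hx => by simp only [h2 x hx])
    (fun x hx => by simp only [h3 x hx, neg_neg, sin_neg])
end

section
/- Let ρ > 0 and let ξ : [0, (π/2)ρ] → ℝ² be of class C¹ with a Lipschitz derivative, with |ξ'(s)| = 1 for all s and |ξ''(s)| ≤ 1/ρ for a.e. s. Assume ξ(0) = 0 and ξ'(0) = (1,0). Then the first component satisfies ξ₁(s) ≥ ρ · sin(s/ρ) for every s ∈ [0, (π/2)ρ]. -/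
/-!
Since `ξ''` bounds the speed of `ξ'` a.e. and `ξ'` is absolutely continuous, `ξ'` is a
`1/ρ`-Lipschitz curve on the unit circle. Arc length dominates angle, so the angle between
`ξ' 0 = e₁` and `ξ' s` is at most `s / ρ ≤ π / 2`, i.e. `ξ'₁ s ≥ cos (s / ρ)`; integrating this
from `0` gives `ξ₁ s ≥ ρ sin (s / ρ)`.
-/

open Set Real Filter Topology MeasureTheory InnerProductGeometry
open scoped NNReal RealInnerProductSpace

section

variable {E : Type*} [NormedAddCommGroup E] [NormedSpace ℝ E]

theorem LipschitzOnWith.of_ae_hasDerivWithinAt_norm_le {f f' : ℝ → E} {K C : ℝ≥0} {a b : ℝ}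
    (hf : LipschitzOnWith K f (Icc a b))
    (hf' : ∀ᵐ t, t ∈ Icc a b → HasDerivWithinAt f (f' t) (Icc a b) t ∧ ‖f' t‖ ≤ C) :
    LipschitzOnWith C f (Icc a b) := by
  refine LipschitzOnWith.of_dist_le_mul fun y hy x hx ↦ ?_
  obtain ⟨φ, hφ, hφxy⟩ := exists_dual_vector'' ℝ (f y - f x)
  have hsub : uIcc x y ⊆ Icc a b := uIcc_subset_Icc hx hy
  have hac : AbsolutelyContinuousOnInterval (φ ∘ f) x y :=
    (φ.lipschitz.comp_lipschitzOnWith (hf.mono hsub)).absolutelyContinuousOnInterval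
  have hderiv : ∀ᵐ t, t ∈ uIoc x y → ‖deriv (φ ∘ f) t‖ ≤ C := by
    filter_upwards [hf', Measure.ae_ne volume (max x y)] with t ht htmax htI
    have htI' : t ∈ Ioo a b :=
      ⟨(le_min hx.1 hy.1).trans_lt htI.1, (htI.2.lt_of_ne htmax).trans_le (max_le hx.2 hy.2)⟩
    obtain ⟨hd, hbound⟩ := ht (Ioo_subset_Icc_self htI')
    rw [(φ.hasFDerivAt.comp_hasDerivAt t (hd.hasDerivAt (Icc_mem_nhds htI'.1 htI'.2))).deriv]
    calc ‖φ (f' t)‖ ≤ ‖φ‖ * ‖f' t‖ := φ.le_opNorm _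
      _ ≤ 1 * C := by gcongr
      _ = C := one_mul _
  calc dist (f y) (f x) = (φ ∘ f) y - (φ ∘ f) x := by
        rw [dist_eq_norm, Function.comp_apply, Function.comp_apply, ← map_sub, hφxy]
        rfl
    _ = ∫ t in x..y, deriv (φ ∘ f) t := hac.integral_deriv_eq_sub.symm
    _ ≤ C * |y - x| :=
      (le_abs_self _).trans (intervalIntegral.norm_integral_le_of_norm_le_const_ae hderiv)
    _ = C * dist y x := by rw [Real.dist_eq]

end

section

variable {V : Type*} [NormedAddCommGroup V] [InnerProductSpace ℝ V]

theorem angle_eq_two_mul_arcsin_of_norm_eq_one {v w : V} (hv : ‖v‖ = 1) (hw : ‖w‖ = 1) :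
    angle v w = 2 * arcsin (‖v - w‖ / 2) := by
  have hcos := cos_two_mul (angle v w / 2)
  have hlaw := norm_sub_sq_eq_norm_sq_add_norm_sq_sub_two_mul_norm_mul_norm_mul_cos_angle v w
  rw [mul_div_cancel₀ _ two_ne_zero] at hcos
  rw [hv, hw] at hlaw
  set θ := angle v w
  have hθ₀ : 0 ≤ θ := angle_nonneg v w
  have hθπ : θ ≤ π := angle_le_pi v w
  have hsq : ‖v - w‖ ^ 2 = (2 * sin (θ / 2)) ^ 2 := by
    linear_combination hlaw - 2 * hcos - 4 * sin_sq_add_cos_sq (θ / 2)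
  have hsin : 0 ≤ sin (θ / 2) := sin_nonneg_of_nonneg_of_le_pi (by linarith) (by linarith)
  rw [(pow_left_inj₀ (norm_nonneg _) (by positivity) two_ne_zero).1 hsq,
    mul_div_cancel_left₀ _ two_ne_zero, arcsin_sin (by linarith) (by linarith)]
  ring

theorem hasDerivAt_two_mul_arcsin_mul_sub_div_two (C x : ℝ) :
    HasDerivAt (fun z ↦ 2 * arcsin (C * (z - x) / 2)) C x := by
  have hlin : HasDerivAt (fun z ↦ C * (z - x) / 2) (C / 2) x := by
    simpa using (((hasDerivAt_id x).sub_const x).const_mul C).div_const 2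
  refine (((hasDerivAt_arcsin (x := C * (x - x) / 2) (by simp) (by simp)).comp x hlin).const_mul
    2).congr_deriv ?_
  simp only [sub_self, mul_zero, zero_div]
  norm_num
  ring

/-- The right Dini derivative of `t ↦ angle (u a) (u t)` is at most `C`: by the triangle
inequality its increment is at most `angle (u t) (u z) = 2 arcsin (‖u t - u z‖ / 2)`, which is
`C (z - t) + o(z - t)`. -/
theorem angle_le_mul_of_lipschitzOnWith {u : ℝ → V} {C : ℝ≥0} {a b : ℝ}
    (hu : LipschitzOnWith C u (Icc a b)) (hnorm : ∀ t ∈ Icc a b, ‖u t‖ = 1) :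
    ∀ x ∈ Icc a b, angle (u a) (u x) ≤ C * (x - a) := by
  intro x hx
  have hne : ∀ t ∈ Icc a b, u t ≠ 0 := fun t ht ↦ norm_ne_zero_iff.1 (by simp [hnorm t ht])
  have ha : a ∈ Icc a b := left_mem_Icc.2 (hx.1.trans hx.2)
  refine image_le_of_liminf_slope_right_le_deriv_boundary (f := fun t ↦ angle (u a) (u t))
    (B := fun t ↦ C * (t - a)) (B' := fun _ ↦ (C : ℝ)) ?_ (by simp [angle_self (hne a ha)])
    (by fun_prop) ?_ ?_ hx
  · intro t ht
    exact (continuousAt_angle (x := (u a, u t)) (hne a ha) (hne t ht)).comp_continuousWithinAt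
      (f := fun t ↦ (u a, u t)) (continuousWithinAt_const.prodMk (hu.continuousOn t ht))
  · intro t _
    simpa using ((hasDerivAt_id t).sub_const a).const_mul (C : ℝ) |>.hasDerivWithinAt
  · intro t ht r hr
    have hslope : Tendsto (slope (fun z ↦ 2 * arcsin (C * (z - t) / 2)) t) (𝓝[>] t) (𝓝 C) :=
      (hasDerivWithinAt_iff_tendsto_slope' (lt_irrefl t)).1
        (hasDerivAt_two_mul_arcsin_mul_sub_div_two C t).hasDerivWithinAt
    refine Eventually.frequently ?_
    filter_upwards [hslope (gt_mem_nhds hr), Ioo_mem_nhdsGT ht.2] with z hz hzI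
    have htI : t ∈ Icc a b := Ico_subset_Icc_self ht
    have hzI' : z ∈ Icc a b := ⟨ht.1.trans hzI.1.le, hzI.2.le⟩
    have hangle : angle (u t) (u z) ≤ 2 * arcsin (C * (z - t) / 2) := by
      rw [angle_eq_two_mul_arcsin_of_norm_eq_one (hnorm t htI) (hnorm z hzI')]
      gcongr
      rw [norm_sub_rev, ← dist_eq_norm, ← abs_of_pos (sub_pos.2 hzI.1), ← Real.dist_eq]
      exact hu.dist_le_mul z hzI' t htI
    have htri := angle_le_angle_add_angle (u a) (u t) (u z)
    refine lt_of_le_of_lt ?_ hz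
    simp only [slope_def_field, sub_self, mul_zero, zero_div, arcsin_zero, sub_zero]
    exact div_le_div_of_nonneg_right (by linarith) (sub_pos.2 hzI.1).le

theorem cos_le_inner_of_angle_le {v w : V} (hv : ‖v‖ = 1) (hw : ‖w‖ = 1) {θ : ℝ}
    (hθ : angle v w ≤ θ) (hθπ : θ ≤ π) : cos θ ≤ ⟪v, w⟫ := by
  simpa [cos_angle, hv, hw] using cos_le_cos_of_nonneg_of_le_pi (angle_nonneg v w) hθπ hθ

end

/-- Lemma on curves with curvature bounded by `1/ρ` starting horizontally at the
origin: the first component dominates `ρ sin(s/ρ)` on `[0, (π/2)ρ]`. -/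
theorem first_component_lower_bound (ρ : ℝ) (hρ : 0 < ρ)
    (ξ ξ' ξ'' : ℝ → EuclideanSpace ℝ (Fin 2)) (K : NNReal)
    (hd : ∀ s ∈ Icc 0 (π / 2 * ρ), HasDerivWithinAt ξ (ξ' s) (Icc 0 (π / 2 * ρ)) s)
    (hlip : LipschitzOnWith K ξ' (Icc 0 (π / 2 * ρ)))
    (hdd : ∀ᵐ s ∂volume, s ∈ Icc 0 (π / 2 * ρ) →
      HasDerivWithinAt ξ' (ξ'' s) (Icc 0 (π / 2 * ρ)) s ∧ ‖ξ'' s‖ ≤ 1 / ρ)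
    (hunit : ∀ s ∈ Icc 0 (π / 2 * ρ), ‖ξ' s‖ = 1)
    (h0 : ξ 0 = 0) (h0' : ξ' 0 = (WithLp.equiv 2 _).symm ![1, 0]) :
    ∀ s ∈ Icc 0 (π / 2 * ρ), ρ * sin (s / ρ) ≤ ξ s 0 := by
  set L := π / 2 * ρ with hL_def
  have hL : 0 ≤ L := by positivity
  have hρ_inv : ((ρ⁻¹).toNNReal : ℝ) = ρ⁻¹ := coe_toNNReal _ (inv_nonneg.2 hρ.le)
  have hlip_inv : LipschitzOnWith (ρ⁻¹).toNNReal ξ' (Icc 0 L) := by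
    refine hlip.of_ae_hasDerivWithinAt_norm_le (f' := ξ'') ?_
    filter_upwards [hdd] with t ht htI
    simpa [hρ_inv] using ht htI
  have hcos : ∀ s ∈ Icc 0 L, cos (s / ρ) ≤ ξ' s 0 := by
    intro s hs
    have hangle := angle_le_mul_of_lipschitzOnWith hlip_inv hunit s hs
    rw [hρ_inv, sub_zero, inv_mul_eq_div] at hangle
    have hsπ : s / ρ ≤ π := by
      rw [div_le_iff₀ hρ]; nlinarith [hs.2, pi_pos, hL_def]
    simpa [h0', PiLp.inner_apply, Fin.sum_univ_two] using
      cos_le_inner_of_angle_le (hunit 0 (left_mem_Icc.2 hL)) (hunit s hs) hangle hsπ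
  have hξ₁ : ∀ s ∈ Icc 0 L, HasDerivWithinAt (fun t ↦ ξ t 0) (ξ' s 0) (Icc 0 L) s := fun s hs ↦
    (EuclideanSpace.proj (𝕜 := ℝ) (0 : Fin 2)).hasFDerivAt.comp_hasDerivWithinAt s (hd s hs)
  have hsin : ∀ s, HasDerivAt (fun t ↦ ρ * sin (t / ρ)) (cos (s / ρ)) s := fun s ↦
    (((hasDerivAt_id' s).div_const ρ).sin.const_mul ρ).congr_deriv (by field_simp)
  refine image_le_of_deriv_right_le_deriv_boundary (by fun_prop)
    (fun s _ ↦ (hsin s).hasDerivWithinAt) (by simp [h0])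
    (fun s hs ↦ (hξ₁ s hs).continuousWithinAt) (fun s hs ↦ ?_)
    (fun s hs ↦ hcos s (Ico_subset_Icc_self hs))
  exact ((hξ₁ s (Ico_subset_Icc_self hs)).mono (Icc_subset_Icc_left hs.1)).mono_of_mem_nhdsWithin
    (Icc_mem_nhdsGE hs.2)
end

section
/- Let ξ ∈ C¹([0,L]; ℝ²) with |ξ'(s)| = 1 for all s. Suppose ξ satisfies: for every s ∈ [0,L], the two open disks B¹(s) = B_ρ(ξ(s) + ρ Jξ'(s)) and B²(s) = B_ρ(ξ(s) - ρ Jξ'(s)) contain no point ξ(σ) for σ ∈ [0,L], and there exist open half disks B⁻, B⁺ of radius 2ρ centered at ξ(0), ξ(L) with diameters normal to ξ'(0), ξ'(L), lying on the outward side, containing no point ξ(σ). Then ξ is injective on [0,L]. -/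
/-!
The tangent disks condition gives the chord bound
`2ρ |⟪J ξ' s, ξ σ - ξ s⟫| ≤ ‖ξ σ - ξ s‖²`. Since `ξ'` is uniformly continuous, self-intersections
`ξ a = ξ b`, `a < b`, have `b - a` bounded below, so if `ξ` is not injective there is one with `b`
minimal. The chord bound at `a`, differentiated at `b`, forces `ξ' b = ± ξ' a`. By the chord bound
again, two points of the curve near the double point on a common normal line of `ξ' b` coincide.
Moving slightly along the branch through `a` (backwards if the tangents agree, forwards if they
are opposite) and matching with the branch just before `b` then gives a self-intersection with a
smaller second parameter, unless `a = 0` and the tangents agree; in that case the points just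
before `b` lie in the outward half disk at `ξ 0`.
-/

open Set Metric RealInnerProductSpace

noncomputable def Jrot (v : EuclideanSpace ℝ (Fin 2)) : EuclideanSpace ℝ (Fin 2) :=
  (WithLp.equiv 2 (Fin 2 → ℝ)).symm ![-v 1, v 0]

open Filter Topology Asymptotics

local notation "ℝ²" => EuclideanSpace ℝ (Fin 2)

@[simp] lemma jrot_apply_zero (v : ℝ²) : Jrot v 0 = -v 1 := by simp [Jrot]

@[simp] lemma jrot_apply_one (v : ℝ²) : Jrot v 1 = v 0 := by simp [Jrot]

lemma real_inner_eq_fin_two (x y : ℝ²) : ⟪x, y⟫ = x 0 * y 0 + x 1 * y 1 := by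
  simp [PiLp.inner_apply, Fin.sum_univ_two, mul_comm]

lemma norm_sq_eq_fin_two (x : ℝ²) : ‖x‖ ^ 2 = x 0 * x 0 + x 1 * x 1 := by
  rw [← real_inner_self_eq_norm_sq, real_inner_eq_fin_two]

lemma norm_jrot (v : ℝ²) : ‖Jrot v‖ = ‖v‖ := by
  rw [← sq_eq_sq₀ (norm_nonneg _) (norm_nonneg _), norm_sq_eq_fin_two, norm_sq_eq_fin_two,
    jrot_apply_zero, jrot_apply_one]
  ring

lemma inner_sq_add_inner_jrot_sq {u : ℝ²} (hu : ‖u‖ = 1) (w : ℝ²) :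
    ⟪u, w⟫ ^ 2 + ⟪Jrot u, w⟫ ^ 2 = ‖w‖ ^ 2 := by
  have hu' : u 0 * u 0 + u 1 * u 1 = 1 := by rw [← norm_sq_eq_fin_two, hu, one_pow]
  simp only [real_inner_eq_fin_two, norm_sq_eq_fin_two, jrot_apply_zero, jrot_apply_one]
  linear_combination (w 0 * w 0 + w 1 * w 1) * hu'

lemma inner_jrot_jrot (x y : ℝ²) : ⟪Jrot x, Jrot y⟫ = ⟪x, y⟫ := by
  simp only [real_inner_eq_fin_two, jrot_apply_zero, jrot_apply_one]
  ring

lemma eq_inner_jrot_smul_jrot_of_inner_eq_zero {u w : ℝ²} (hu : ‖u‖ = 1) (huw : ⟪u, w⟫ = 0) :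
    w = ⟪Jrot u, w⟫ • Jrot u := by
  have hu' : u 0 * u 0 + u 1 * u 1 = 1 := by rw [← norm_sq_eq_fin_two, hu, one_pow]
  rw [real_inner_eq_fin_two] at huw
  ext i
  fin_cases i <;> simp only [Fin.zero_eta, Fin.mk_one, Fin.isValue, PiLp.smul_apply, smul_eq_mul,
    real_inner_eq_fin_two, jrot_apply_zero, jrot_apply_one]
  · linear_combination u 0 * huw - w 0 * hu'
  · linear_combination u 1 * huw - w 1 * hu'

lemma abs_inner_jrot_eq_of_inner_eq_zero {u w : ℝ²} (hu : ‖u‖ = 1) (huw : ⟪u, w⟫ = 0) (t : ℝ²) :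
    |⟪Jrot t, w⟫| = |⟪u, t⟫| * ‖w‖ := by
  have hc : |⟪Jrot u, w⟫| = ‖w‖ := by
    have := inner_sq_add_inner_jrot_sq hu w
    rw [huw] at this
    rw [← abs_norm w]
    exact (sq_eq_sq_iff_abs_eq_abs _ _).1 (by linarith)
  conv_lhs => rw [eq_inner_jrot_smul_jrot_of_inner_eq_zero hu huw]
  rw [real_inner_smul_right, inner_jrot_jrot, abs_mul, hc, real_inner_comm u t, mul_comm]

lemma eq_zero_of_two_mul_abs_inner_jrot_le {u t w : ℝ²} {ρ : ℝ} (hu : ‖u‖ = 1) (huw : ⟪u, w⟫ = 0)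
    (hK : 2 * ρ * |⟪Jrot t, w⟫| ≤ ‖w‖ ^ 2) (hw : ‖w‖ < 2 * ρ * |⟪u, t⟫|) : w = 0 := by
  rw [abs_inner_jrot_eq_of_inner_eq_zero hu huw] at hK
  exact norm_eq_zero.1 (by nlinarith [norm_nonneg w])

section InnerProductSpace

variable {E : Type*} [NormedAddCommGroup E] [InnerProductSpace ℝ E]

lemma two_mul_abs_inner_le_norm_sub_sq {p q n : E} {ρ : ℝ} (hn : ‖n‖ = 1)
    (h₁ : q ∉ ball (p + ρ • n) ρ) (h₂ : q ∉ ball (p - ρ • n) ρ) :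
    2 * ρ * |⟪n, q - p⟫| ≤ ‖q - p‖ ^ 2 := by
  rcases le_or_gt ρ 0 with hρ | hρ
  · nlinarith [abs_nonneg ⟪n, q - p⟫, sq_nonneg ‖q - p‖]
  have hside : ∀ r : ℝ, |r| = ρ → q ∉ ball (p + r • n) ρ → 2 * r * ⟪n, q - p⟫ ≤ ‖q - p‖ ^ 2 := by
    intro r hr h
    rw [mem_ball, not_lt, dist_eq_norm, ← sub_sub] at h
    have h2 := pow_le_pow_left₀ hρ.le h 2
    rw [norm_sub_sq_real, norm_smul, Real.norm_eq_abs, hr, hn, real_inner_smul_right,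
      real_inner_comm] at h2
    linarith
  rcases abs_cases ⟪n, q - p⟫ with ⟨h, -⟩ | ⟨h, -⟩
  · rw [h]; exact hside ρ (abs_of_pos hρ) h₁
  · rw [h, mul_neg, ← neg_mul, ← mul_neg]
    exact hside (-ρ) (by rw [abs_neg, abs_of_pos hρ]) (by rwa [neg_smul, ← sub_eq_add_neg])

lemma HasDerivWithinAt.const_inner {f : ℝ → E} {f' : E} {s : Set ℝ} {x : ℝ}
    (hf : HasDerivWithinAt f f' s x) (v : E) :
    HasDerivWithinAt (fun t => ⟪v, f t⟫) ⟪v, f'⟫ s x := by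
  simpa using (hasDerivWithinAt_const x s v).inner ℝ hf

lemma mul_sub_le_inner_sub_of_le_inner_deriv {f f' : ℝ → E} {v : E} {p q κ : ℝ}
    (hf : ∀ x ∈ Icc p q, HasDerivWithinAt f (f' x) (Icc p q) x)
    (hκ : ∀ x ∈ Icc p q, κ ≤ ⟪v, f' x⟫) (hpq : p ≤ q) :
    κ * (q - p) ≤ ⟪v, f q - f p⟫ := by
  have hg : ∀ x ∈ Icc p q,
      HasDerivWithinAt (fun t => ⟪v, f t⟫ - κ * t) (⟪v, f' x⟫ - κ) (Icc p q) x := fun x hx =>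
    ((hf x hx).const_inner v).sub (by simpa using (hasDerivWithinAt_id x _).const_mul κ)
  have hmono := monotoneOn_of_hasDerivWithinAt_nonneg (convex_Icc p q)
    (fun x hx => (hg x hx).continuousWithinAt)
    (fun x hx => (hg x (interior_subset hx)).mono interior_subset)
    (fun x hx => sub_nonneg.2 (hκ x (interior_subset hx)))
    (left_mem_Icc.2 hpq) (right_mem_Icc.2 hpq) hpq
  rw [inner_sub_right]
  linarith

lemma hasDerivWithinAt_zero_of_abs_le_mul_norm_sub_sq {F : Type*} [NormedAddCommGroup F]
    [NormedSpace ℝ F] {f : ℝ → ℝ} {g : ℝ → F} {g' : F} {s : Set ℝ} {x C : ℝ}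
    (hg : HasDerivWithinAt g g' s x) (hx : x ∈ s) (hf : ∀ y ∈ s, |f y| ≤ C * ‖g y - g x‖ ^ 2) :
    HasDerivWithinAt f 0 s x := by
  have hfx : f x = 0 := by simpa using hf x hx
  rw [hasDerivWithinAt_iff_isLittleO]
  simp only [hfx, smul_zero, sub_zero]
  have hO : (fun y => g y - g x) =O[𝓝[s] x] (fun y => y - x) := HasFDerivWithinAt.isBigO_sub hg
  have ho : (fun y => g y - g x) =o[𝓝[s] x] (fun _ => (1 : ℝ)) :=
    (isLittleO_one_iff ℝ).2 (tendsto_sub_nhds_zero_iff.2 hg.continuousWithinAt)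
  have hsq : (fun y => ‖g y - g x‖ ^ 2) =o[𝓝[s] x] (fun y => y - x) := by
    simpa [sq] using hO.norm_left.mul_isLittleO ho.norm_left
  refine (IsBigO.of_bound C ?_).trans_isLittleO hsq
  filter_upwards [self_mem_nhdsWithin] with y hy
  simpa using hf y hy

end InnerProductSpace

lemma exists_apply_eq_with_min_snd {X : Type*} [TopologicalSpace X] [T2Space X] {f : ℝ → X}
    {s : Set ℝ} (hs : IsCompact s) (hf : ContinuousOn f s) {δ x y : ℝ} (hx : x ∈ s) (hy : y ∈ s)
    (hxy : x + δ ≤ y) (hfxy : f x = f y) :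
    ∃ a ∈ s, ∃ b ∈ s, a + δ ≤ b ∧ f a = f b ∧
      ∀ x ∈ s, ∀ y ∈ s, x + δ ≤ y → f x = f y → b ≤ y := by
  set S := (s ×ˢ s ∩ (fun p : ℝ × ℝ => (f p.1, f p.2)) ⁻¹' diagonal X) ∩ {p | p.1 + δ ≤ p.2}
  have hS : IsCompact S := by
    refine (hs.prod hs).of_isClosed_subset (IsClosed.inter ?_ ?_) fun p hp => hp.1.1
    · exact ((hf.comp continuousOn_fst fun p hp => hp.1).prodMk
        (hf.comp continuousOn_snd fun p hp => hp.2)).preimage_isClosed_of_isClosed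
        (hs.isClosed.prod hs.isClosed) isClosed_diagonal
    · exact isClosed_le (continuous_fst.add continuous_const) continuous_snd
  obtain ⟨⟨a, b⟩, ⟨⟨⟨ha, hb⟩, hab⟩, hδ⟩, hmin⟩ :=
    hS.exists_isMinOn ⟨(x, y), ⟨⟨hx, hy⟩, hfxy⟩, hxy⟩ continuous_snd.continuousOn
  exact ⟨a, ha, b, hb, hδ, hab,
    fun x hx y hy hxy hfxy => hmin (a := (x, y)) ⟨⟨⟨hx, hy⟩, hfxy⟩, hxy⟩⟩

section Curve

variable {L ρ δ : ℝ} {ξ ξ' : ℝ → ℝ²}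

lemma norm_sub_le_abs_sub_of_unit_speed (hd : ∀ s ∈ Icc 0 L, HasDerivWithinAt ξ (ξ' s) (Icc 0 L) s)
    (hunit : ∀ s ∈ Icc 0 L, ‖ξ' s‖ = 1) {x y : ℝ} (hx : x ∈ Icc 0 L) (hy : y ∈ Icc 0 L) :
    ‖ξ y - ξ x‖ ≤ |y - x| := by
  simpa using Convex.norm_image_sub_le_of_norm_hasDerivWithin_le hd (fun s hs => (hunit s hs).le)
    (convex_Icc 0 L) hx hy

lemma three_quarters_le_inner_deriv (hunit : ∀ s ∈ Icc 0 L, ‖ξ' s‖ = 1)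
    (hδ : ∀ x ∈ Icc 0 L, ∀ y ∈ Icc 0 L, dist x y ≤ δ → dist (ξ' x) (ξ' y) ≤ 1 / 4)
    {c σ : ℝ} (hc : c ∈ Icc 0 L) (hσ : σ ∈ Icc 0 L) (hσc : dist σ c ≤ δ) :
    3 / 4 ≤ ⟪ξ' c, ξ' σ⟫ := by
  have h₁ : ⟪ξ' c, ξ' σ⟫ = 1 + ⟪ξ' c, ξ' σ - ξ' c⟫ := by
    rw [inner_sub_right, real_inner_self_eq_norm_sq, hunit c hc]; ring
  have h₂ : |⟪ξ' c, ξ' σ - ξ' c⟫| ≤ 1 / 4 := by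
    have := abs_real_inner_le_norm (ξ' c) (ξ' σ - ξ' c)
    rw [hunit c hc, one_mul, ← dist_eq_norm] at this
    exact this.trans (hδ σ hσ c hc hσc)
  linarith [neg_abs_le ⟪ξ' c, ξ' σ - ξ' c⟫]

lemma mul_sub_le_inner_deriv_sub (hd : ∀ s ∈ Icc 0 L, HasDerivWithinAt ξ (ξ' s) (Icc 0 L) s)
    (hunit : ∀ s ∈ Icc 0 L, ‖ξ' s‖ = 1)
    (hδ : ∀ x ∈ Icc 0 L, ∀ y ∈ Icc 0 L, dist x y ≤ δ → dist (ξ' x) (ξ' y) ≤ 1 / 4)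
    {c p q : ℝ} (hc : c ∈ Icc 0 L) (hp : p ∈ Icc 0 L) (hq : q ∈ Icc 0 L)
    (hcp : c - δ ≤ p) (hpq : p ≤ q) (hqc : q ≤ c + δ) :
    3 / 4 * (q - p) ≤ ⟪ξ' c, ξ q - ξ p⟫ := by
  have hsub : Icc p q ⊆ Icc 0 L := Icc_subset_Icc hp.1 hq.2
  refine mul_sub_le_inner_sub_of_le_inner_deriv (fun x hx => (hd x (hsub hx)).mono hsub)
    (fun x hx => three_quarters_le_inner_deriv hunit hδ hc (hsub hx) ?_) hpq
  rw [Real.dist_eq, abs_le]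
  constructor <;> linarith [hx.1, hx.2]

lemma add_lt_of_apply_eq (hd : ∀ s ∈ Icc 0 L, HasDerivWithinAt ξ (ξ' s) (Icc 0 L) s)
    (hunit : ∀ s ∈ Icc 0 L, ‖ξ' s‖ = 1)
    (hδ : ∀ x ∈ Icc 0 L, ∀ y ∈ Icc 0 L, dist x y ≤ δ → dist (ξ' x) (ξ' y) ≤ 1 / 4)
    {s σ : ℝ} (hs : s ∈ Icc 0 L) (hσ : σ ∈ Icc 0 L) (hsσ : s < σ) (heq : ξ s = ξ σ) :
    s + δ < σ := by
  by_contra! hσs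
  have := mul_sub_le_inner_deriv_sub hd hunit hδ hs hs hσ (by linarith [hsσ]) hsσ.le hσs
  rw [heq, sub_self, inner_zero_right] at this
  linarith

lemma deriv_eq_or_eq_neg_of_apply_eq (hd : ∀ s ∈ Icc 0 L, HasDerivWithinAt ξ (ξ' s) (Icc 0 L) s)
    (hunit : ∀ s ∈ Icc 0 L, ‖ξ' s‖ = 1) (hρ : 0 < ρ)
    (hK : ∀ s ∈ Icc 0 L, ∀ σ ∈ Icc 0 L, 2 * ρ * |⟪Jrot (ξ' s), ξ σ - ξ s⟫| ≤ ‖ξ σ - ξ s‖ ^ 2)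
    {a b : ℝ} (ha : a ∈ Icc 0 L) (hb : b ∈ Icc 0 L) (hab : a < b) (heq : ξ a = ξ b) :
    ξ' b = ξ' a ∨ ξ' b = -ξ' a := by
  have hψ := ((hd b hb).sub_const (ξ a)).const_inner (Jrot (ξ' a))
  have hψ₀ : HasDerivWithinAt (fun σ => ⟪Jrot (ξ' a), ξ σ - ξ a⟫) 0 (Icc 0 L) b := by
    refine hasDerivWithinAt_zero_of_abs_le_mul_norm_sub_sq (hd b hb) hb (C := 1 / (2 * ρ))
      fun σ hσ => ?_
    rw [← heq, div_mul_eq_mul_div, one_mul, le_div_iff₀ (by positivity), mul_comm]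
    exact hK a ha σ hσ
  have hperp := (uniqueDiffOn_Icc (ha.1.trans_lt (hab.trans_le hb.2)) b hb).eq_deriv _ hψ hψ₀
  have hsq := inner_sq_add_inner_jrot_sq (hunit a ha) (ξ' b)
  rw [hperp, hunit b hb] at hsq
  rcases sq_eq_one_iff.1 (by linarith : ⟪ξ' a, ξ' b⟫ ^ 2 = 1) with h | h
  · exact .inl ((inner_eq_one_iff_of_norm_eq_one (hunit a ha) (hunit b hb)).1 h).symm
  · exact .inr (neg_eq_iff_eq_neg.1
      ((inner_eq_neg_one_iff_of_norm_eq_one (hunit a ha) (hunit b hb)).1 h).symm)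

lemma exists_apply_eq_of_inner_sub_neg
    (hd : ∀ s ∈ Icc 0 L, HasDerivWithinAt ξ (ξ' s) (Icc 0 L) s)
    (hunit : ∀ s ∈ Icc 0 L, ‖ξ' s‖ = 1)
    (hK : ∀ s ∈ Icc 0 L, ∀ σ ∈ Icc 0 L, 2 * ρ * |⟪Jrot (ξ' s), ξ σ - ξ s⟫| ≤ ‖ξ σ - ξ s‖ ^ 2)
    (hδ : ∀ x ∈ Icc 0 L, ∀ y ∈ Icc 0 L, dist x y ≤ δ → dist (ξ' x) (ξ' y) ≤ 1 / 4)
    {a b τ h : ℝ} (ha : a ∈ Icc 0 L) (hb : b ∈ Icc 0 L) (hτ : τ ∈ Icc 0 L) (heq : ξ a = ξ b)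
    (hpar : ξ' b = ξ' a ∨ ξ' b = -ξ' a) (hhδ : 2 * h ≤ δ) (hhρ : 2 * h < ρ)
    (hτa : dist τ a ≤ h) (hτb : τ < b - 2 * h) (hτb' : ⟪ξ' b, ξ τ - ξ a⟫ < 0) :
    ∃ ν ∈ Icc 0 L, τ < ν ∧ ν < b ∧ ξ τ = ξ ν := by
  have hh : 0 ≤ h := dist_nonneg.trans hτa
  have hτ' : 3 / 4 ≤ |⟪ξ' b, ξ' τ⟫| := by
    have := three_quarters_le_inner_deriv hunit hδ ha hτ (by linarith)
    rcases hpar with hb' | hb' <;> rw [hb']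
    · exact this.trans (le_abs_self _)
    · rwa [inner_neg_left, abs_neg, abs_of_nonneg (by linarith)]
  have hsub : Icc (b - 2 * h) b ⊆ Icc 0 L := Icc_subset_Icc (by linarith [hτ.1]) hb.2
  have hrise := mul_sub_le_inner_deriv_sub hd hunit hδ hb (hsub (left_mem_Icc.2 (by linarith)))
    hb (by linarith) (by linarith) (by linarith)
  have hτnear : ‖ξ a - ξ τ‖ ≤ h :=
    (norm_sub_le_abs_sub_of_unit_speed hd hunit hτ ha).trans (by rwa [abs_sub_comm, ← Real.dist_eq])
  have hfall : ⟪ξ' b, ξ a - ξ τ⟫ ≤ h :=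
    (real_inner_le_norm _ _).trans (by rw [hunit b hb, one_mul]; exact hτnear)
  rw [inner_sub_right] at hrise hfall hτb'
  rw [heq] at hfall hτb'
  obtain ⟨ν, hν, hνφ⟩ := intermediate_value_Ioo (by linarith) (fun σ hσ =>
    ((hd σ (hsub hσ)).const_inner (ξ' b)).continuousWithinAt.mono hsub)
    (show ⟪ξ' b, ξ τ⟫ ∈ Ioo _ _ from ⟨by linarith, by linarith⟩)
  have hνI : ν ∈ Icc 0 L := hsub (Ioo_subset_Icc_self hν)
  have hνnear : ‖ξ ν - ξ b‖ ≤ 2 * h :=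
    (norm_sub_le_abs_sub_of_unit_speed hd hunit hb hνI).trans
      (by rw [abs_le]; constructor <;> linarith [hν.1, hν.2])
  have hw : ‖ξ ν - ξ τ‖ < 2 * ρ * |⟪ξ' b, ξ' τ⟫| :=
    calc ‖ξ ν - ξ τ‖ = ‖(ξ ν - ξ b) + (ξ a - ξ τ)‖ := by rw [heq, sub_add_sub_cancel]
      _ ≤ 2 * h + h := (norm_add_le _ _).trans (add_le_add hνnear hτnear)
      _ < 2 * ρ * (3 / 4) := by linarith
      _ ≤ 2 * ρ * |⟪ξ' b, ξ' τ⟫| := by gcongr; linarith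
  have hperp : ⟪ξ' b, ξ ν - ξ τ⟫ = 0 := by rw [inner_sub_right, sub_eq_zero]; exact hνφ
  refine ⟨ν, hνI, by linarith [hν.1], hν.2, (sub_eq_zero.1 ?_).symm⟩
  exact eq_zero_of_two_mul_abs_inner_jrot_le (hunit b hb) hperp (hK τ hτ ν hνI) hw

lemma exists_apply_eq_of_lt_of_apply_eq
    (hd : ∀ s ∈ Icc 0 L, HasDerivWithinAt ξ (ξ' s) (Icc 0 L) s)
    (hunit : ∀ s ∈ Icc 0 L, ‖ξ' s‖ = 1) (hρ : 0 < ρ)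
    (hK : ∀ s ∈ Icc 0 L, ∀ σ ∈ Icc 0 L, 2 * ρ * |⟪Jrot (ξ' s), ξ σ - ξ s⟫| ≤ ‖ξ σ - ξ s‖ ^ 2)
    (hδ : ∀ x ∈ Icc 0 L, ∀ y ∈ Icc 0 L, dist x y ≤ δ → dist (ξ' x) (ξ' y) ≤ 1 / 4)
    (hδ₀ : 0 < δ) (hδρ : δ ≤ ρ)
    (hminus : ∀ σ ∈ Icc 0 L, ¬(dist (ξ σ) (ξ 0) < 2 * ρ ∧ ⟪ξ σ - ξ 0, ξ' 0⟫ < 0))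
    {a b : ℝ} (ha : a ∈ Icc 0 L) (hb : b ∈ Icc 0 L) (hab : a + δ ≤ b) (heq : ξ a = ξ b) :
    ∃ τ ∈ Icc 0 L, ∃ ν ∈ Icc 0 L, τ < ν ∧ ν < b ∧ ξ τ = ξ ν := by
  have hpar := deriv_eq_or_eq_neg_of_apply_eq hd hunit hρ hK ha hb (by linarith) heq
  have earlier := fun (τ : ℝ) (hτ : τ ∈ Icc 0 L) ↦ exists_apply_eq_of_inner_sub_neg hd hunit hK hδ
    ha hb hτ heq hpar (h := δ / 4) (by linarith) (by linarith)
  rcases hpar with hpar | hpar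
  · rcases ha.1.eq_or_lt with rfl | ha₀
    · exfalso
      have hbh : b - δ / 4 ∈ Icc 0 L := ⟨by linarith, by linarith [hb.2]⟩
      have hrise := mul_sub_le_inner_deriv_sub hd hunit hδ hb hbh hb (by linarith) (by linarith)
        (by linarith)
      refine hminus _ hbh ⟨?_, ?_⟩
      · rw [heq, dist_eq_norm]
        refine (norm_sub_le_abs_sub_of_unit_speed hd hunit hb hbh).trans_lt ?_
        rw [abs_of_neg] <;> linarith
      · rw [heq, ← hpar, real_inner_comm, ← neg_sub, inner_neg_right]
        linarith
    · set τ := max 0 (a - δ / 4)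
      have hτI : τ ∈ Icc 0 L := ⟨le_max_left _ _, max_le (ha.1.trans ha.2) (by linarith [ha.2])⟩
      have hτa : τ < a := max_lt ha₀ (by linarith)
      have hrise := mul_sub_le_inner_deriv_sub hd hunit hδ ha hτI ha
        (by linarith [le_max_right 0 (a - δ / 4)]) hτa.le (by linarith)
      obtain ⟨ν, hν, hτν⟩ := earlier τ hτI
        (by rw [Real.dist_eq, abs_le]; constructor <;> linarith [le_max_right 0 (a - δ / 4)])
        (by linarith) (by rw [hpar, ← neg_sub, inner_neg_right]; linarith)
      exact ⟨τ, hτI, ν, hν, hτν⟩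
  · have hτI : a + δ / 4 ∈ Icc 0 L := ⟨by linarith [ha.1], by linarith [hb.2]⟩
    have hrise := mul_sub_le_inner_deriv_sub hd hunit hδ ha ha hτI (by linarith) (by linarith)
      (by linarith)
    obtain ⟨ν, hν, hτν⟩ := earlier (a + δ / 4) hτI
      (by rw [Real.dist_eq, abs_of_nonneg] <;> linarith) (by linarith)
      (by rw [hpar, inner_neg_left]; linarith)
    exact ⟨a + δ / 4, hτI, ν, hν, hτν⟩

end Curve

theorem injective_of_two_disks_condition_general (L ρ : ℝ) (hρ : 0 < ρ)
    (ξ ξ' : ℝ → EuclideanSpace ℝ (Fin 2))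
    (hd : ∀ s ∈ Icc 0 L, HasDerivWithinAt ξ (ξ' s) (Icc 0 L) s)
    (hc : ContinuousOn ξ' (Icc 0 L))
    (hunit : ∀ s ∈ Icc 0 L, ‖ξ' s‖ = 1)
    -- (a) the two tangent open disks of radius ρ at each point avoid the curve
    (hdisks : ∀ s ∈ Icc 0 L, ∀ σ ∈ Icc 0 L,
      ξ σ ∉ ball (ξ s + ρ • Jrot (ξ' s)) ρ ∧ ξ σ ∉ ball (ξ s - ρ • Jrot (ξ' s)) ρ)
    -- (b) the outward open half disks of radius 2ρ at the endpoints avoid the curve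
    (hminus : ∀ σ ∈ Icc 0 L, ¬(dist (ξ σ) (ξ 0) < 2 * ρ ∧ ⟪ξ σ - ξ 0, ξ' 0⟫ < 0)) :
    InjOn ξ (Icc 0 L) := by
  have hK : ∀ s ∈ Icc 0 L, ∀ σ ∈ Icc 0 L,
      2 * ρ * |⟪Jrot (ξ' s), ξ σ - ξ s⟫| ≤ ‖ξ σ - ξ s‖ ^ 2 := fun s hs σ hσ ↦
    two_mul_abs_inner_le_norm_sub_sq ((norm_jrot _).trans (hunit s hs)) (hdisks s hs σ hσ).1
      (hdisks s hs σ hσ).2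
  obtain ⟨δ, hδ₀, hδ⟩ := uniformContinuousOn_iff_le.1
    (isCompact_Icc.uniformContinuousOn_of_continuous hc) (1 / 4) (by norm_num)
  replace hδ : ∀ x ∈ Icc 0 L, ∀ y ∈ Icc 0 L, dist x y ≤ min δ ρ → dist (ξ' x) (ξ' y) ≤ 1 / 4 :=
    fun x hx y hy hxy ↦ hδ x hx y hy (hxy.trans (min_le_left δ ρ))
  intro x hx y hy hxy
  by_contra hne
  obtain ⟨x, hx, y, hy, hlt, hxy⟩ : ∃ x ∈ Icc 0 L, ∃ y ∈ Icc 0 L, x < y ∧ ξ x = ξ y := by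
    rcases lt_or_gt_of_ne hne with h | h
    exacts [⟨x, hx, y, hy, h, hxy⟩, ⟨y, hy, x, hx, h, hxy.symm⟩]
  obtain ⟨a, ha, b, hb, hab, heq, hmin⟩ := exists_apply_eq_with_min_snd isCompact_Icc
    (fun s hs ↦ (hd s hs).continuousWithinAt) hx hy
    (add_lt_of_apply_eq hd hunit hδ hx hy hlt hxy).le hxy
  obtain ⟨τ, hτ, ν, hν, hτν, hνb, hτν'⟩ := exists_apply_eq_of_lt_of_apply_eq hd hunit hρ hK hδ
    (lt_min hδ₀ hρ) (min_le_right δ ρ) hminus ha hb hab heq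
  exact (hmin τ hτ ν hν (add_lt_of_apply_eq hd hunit hδ hτ hν hτν hτν').le hτν').not_gt hνb

/-- The two disks condition implies injectivity of the arc length parametrization. -/
theorem injective_of_two_disks_condition (L ρ : ℝ) (hL : 0 < L) (hρ : 0 < ρ)
    (ξ ξ' : ℝ → EuclideanSpace ℝ (Fin 2))
    (hd : ∀ s ∈ Icc 0 L, HasDerivWithinAt ξ (ξ' s) (Icc 0 L) s)
    (hc : ContinuousOn ξ' (Icc 0 L))
    (hunit : ∀ s ∈ Icc 0 L, ‖ξ' s‖ = 1)
    -- (a) the two tangent open disks of radius ρ at each point avoid the curve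
    (hdisks : ∀ s ∈ Icc 0 L, ∀ σ ∈ Icc 0 L,
      ξ σ ∉ ball (ξ s + ρ • Jrot (ξ' s)) ρ ∧ ξ σ ∉ ball (ξ s - ρ • Jrot (ξ' s)) ρ)
    -- (b) the outward open half disks of radius 2ρ at the endpoints avoid the curve
    (hminus : ∀ σ ∈ Icc 0 L, ¬(dist (ξ σ) (ξ 0) < 2 * ρ ∧ ⟪ξ σ - ξ 0, ξ' 0⟫ < 0))
    (hplus : ∀ σ ∈ Icc 0 L, ¬(dist (ξ σ) (ξ L) < 2 * ρ ∧ 0 < ⟪ξ σ - ξ L, ξ' L⟫)) :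
    InjOn ξ (Icc 0 L) :=
  injective_of_two_disks_condition_general L ρ hρ ξ ξ' hd hc hunit hdisks hminus
end

section
/- Let D₁, D₂ ⊂ ℝ² be open disks of the same radius ρ with distinct centers c₁ ≠ c₂. Let p₁ ∈ ∂D₁ \ D₂ and p₂ ∈ ∂D₂ \ D₁, and let S₁ be the (half-open) radius segment of D₁ from p₁ to c₁ (excluding p₁) and S₂ the radius segment of D₂ from p₂ to c₂ (excluding p₂). Then S₁ ∩ S₂ = ∅. -/
/-! A common point `x` of the segments lies at distance `t₁ρ` from `p₁`, `(1 - t₁)ρ` from `c₁`,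
`t₂ρ` from `p₂` and `(1 - t₂)ρ` from `c₂`. The triangle inequalities through `x` for `p₁c₂` and
`p₂c₁`, together with `ρ ≤ dist p₁ c₂` and `ρ ≤ dist p₂ c₁`, then force `t₁ρ = t₂ρ` and
`dist p₁ c₂ = ρ`, so equality holds in the first one. By strict convexity `x` lies on `[p₁, c₂]`
at the same parameter `t₁` at which it lies on `[p₁, c₁]`, hence `c₁ = c₂`. -/

open Set AffineMap

theorem AffineMap.lineMap_right_injective {k V P : Type*} [Ring k] [IsDomain k] [AddCommGroup V]
    [Module k V] [Module.IsTorsionFree k V] [AddTorsor V P] (p : P) {t : k} (ht : t ≠ 0) :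
    Function.Injective fun c : P ↦ lineMap p c t := fun c₁ c₂ h ↦ by
  have : t • (c₁ -ᵥ p) = t • (c₂ -ᵥ p) := by
    simpa only [lineMap_vsub_left] using congrArg (· -ᵥ p) h
  exact vsub_left_cancel (smul_right_injective V ht this)

section StrictConvex

variable {V P : Type*} [NormedAddCommGroup V] [NormedSpace ℝ V] [StrictConvexSpace ℝ V]
  [MetricSpace P] [NormedAddTorsor V P]

theorem eq_of_lineMap_eq_lineMap_of_le_dist {p₁ p₂ c₁ c₂ : P} {ρ t₁ t₂ : ℝ}
    (h₁ : dist p₁ c₁ = ρ) (h₂ : dist p₂ c₂ = ρ) (h₁₂ : ρ ≤ dist p₁ c₂) (h₂₁ : ρ ≤ dist p₂ c₁)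
    (ht₁ : t₁ ∈ Ioc 0 1) (ht₂ : t₂ ∈ Icc 0 1) (h : lineMap p₁ c₁ t₁ = lineMap p₂ c₂ t₂) :
    c₁ = c₂ := by
  set x := lineMap p₁ c₁ t₁ with hx
  have hp₁x : dist p₁ x = t₁ * ρ := by
    rw [hx, dist_left_lineMap, h₁, Real.norm_of_nonneg ht₁.1.le]
  have hxc₁ : dist x c₁ = (1 - t₁) * ρ := by
    rw [hx, dist_lineMap_right, h₁, Real.norm_of_nonneg (sub_nonneg.2 ht₁.2)]
  have hp₂x : dist p₂ x = t₂ * ρ := by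
    rw [h, dist_left_lineMap, h₂, Real.norm_of_nonneg ht₂.1]
  have hxc₂ : dist x c₂ = (1 - t₂) * ρ := by
    rw [h, dist_lineMap_right, h₂, Real.norm_of_nonneg (sub_nonneg.2 ht₂.2)]
  have tri₁ := dist_triangle p₁ x c₂
  have tri₂ := dist_triangle p₂ x c₁
  have hρ : t₁ * ρ = t₂ * ρ := by linarith
  have hp₁c₂ : dist p₁ c₂ = ρ := by linarith
  have hx' : x = lineMap p₁ c₂ t₁ :=
    eq_lineMap_of_dist_eq_mul_of_dist_eq_mul (by rw [hp₁x, hp₁c₂]) (by rw [hp₁c₂]; linarith)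
  exact lineMap_right_injective p₁ ht₁.1.ne' hx'

end StrictConvex

theorem radius_segments_disjoint_general (ρ : ℝ)
    (c₁ c₂ p₁ p₂ : EuclideanSpace ℝ (Fin 2)) (hc : c₁ ≠ c₂)
    (hp₁ : ‖p₁ - c₁‖ = ρ) (hp₁' : ρ ≤ ‖p₁ - c₂‖)
    (hp₂ : ‖p₂ - c₂‖ = ρ) (hp₂' : ρ ≤ ‖p₂ - c₁‖) :
    ∀ t₁ ∈ Ioc (0 : ℝ) 1, ∀ t₂ ∈ Ioc (0 : ℝ) 1,
      p₁ + t₁ • (c₁ - p₁) ≠ p₂ + t₂ • (c₂ - p₂) := by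
  intro t₁ ht₁ t₂ ht₂ h
  simp only [← dist_eq_norm] at hp₁ hp₁' hp₂ hp₂'
  refine hc (eq_of_lineMap_eq_lineMap_of_le_dist hp₁ hp₂ hp₁' hp₂' ht₁ (Ioc_subset_Icc_self ht₂) ?_)
  simpa only [lineMap_apply_module', add_comm] using h

/-- Two (half-open) radius segments of equal-radius disks are disjoint, provided
each segment's boundary endpoint lies outside the other disk. -/
theorem radius_segments_disjoint (ρ : ℝ) (hρ : 0 < ρ)
    (c₁ c₂ p₁ p₂ : EuclideanSpace ℝ (Fin 2)) (hc : c₁ ≠ c₂)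
    (hp₁ : ‖p₁ - c₁‖ = ρ) (hp₁' : ρ ≤ ‖p₁ - c₂‖)
    (hp₂ : ‖p₂ - c₂‖ = ρ) (hp₂' : ρ ≤ ‖p₂ - c₁‖) :
    ∀ t₁ ∈ Ioc (0 : ℝ) 1, ∀ t₂ ∈ Ioc (0 : ℝ) 1,
      p₁ + t₁ • (c₁ - p₁) ≠ p₂ + t₂ • (c₂ - p₂) :=
  radius_segments_disjoint_general ρ c₁ c₂ p₁ p₂ hc hp₁ hp₁' hp₂ hp₂'
end
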